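/- Let γ(z; t) = (i/π)(1/(z − t) + t/(t² + 1)) be the modified Cauchy kernel. For every fixed y > 0 the map t ↦ γ(iy; t) is integrable on ℝ, and its Fourier transform satisfies: for x ≠ 0, ∫ℝ γ(iy; t) e^{ixt} dt = 2·𝟙_{[0,∞)}(x)·e^{−yx} − sign(x)·e^{−|x|}, and for x = 0 the integral equals 1. -/

import Mathlib

/-
The function `F_y(x) = eˣ` for `x ≤ 0`, `F_y(x) = 2e^{-yx} - e^{-x}` for `x > 0` is continuous and
integrable, and its Fourier transform is a sum of three one-sided exponential integrals. By the
partial fraction decomposition `2π γ(iy; t) = 2/(y + it) + 1/(1 - it) - 1/(1 + it)` it equals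
`2π γ(iy; 2πw)`. Since `γ(iy; t) = O(1/t²)`, Fourier inversion applies and gives
`∫ γ(iy; t) e^{ixt} dt = F_y(x)`, which is the claimed closed form.
-/

open MeasureTheory Complex Set

noncomputable def modCauchyKernel (z : ℂ) (t : ℝ) : ℂ :=
  (Complex.I / (Real.pi : ℂ)) * (1 / (z - (t : ℂ)) + (t : ℂ) / ((t : ℂ) ^ 2 + 1))

open scoped Real FourierTransform

section Kernel

variable {y : ℝ}

lemma ofReal_add_ofReal_mul_I_ne_zero (hy : y ≠ 0) (t : ℝ) : (y : ℂ) + t * I ≠ 0 :=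
  fun h => hy (by simpa using congrArg re h)

lemma one_add_sq_ofReal_ne_zero (t : ℝ) : 1 + (t : ℂ) ^ 2 ≠ 0 := by
  exact_mod_cast (by positivity : (1 + t ^ 2 : ℝ) ≠ 0)

lemma modCauchyKernel_I_mul (hy : y ≠ 0) (t : ℝ) :
    modCauchyKernel (I * y) t = (1 + t * y * I) / (π * (y + t * I) * (1 + t ^ 2)) := by
  have hyt := ofReal_add_ofReal_mul_I_ne_zero hy t
  have hyt' : I * y - t ≠ 0 := by
    rw [show I * y - t = I * (y + t * I) by ring_nf; rw [I_sq]; ring]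
    exact mul_ne_zero I_ne_zero hyt
  have ht := one_add_sq_ofReal_ne_zero t
  have ht' : (t : ℂ) ^ 2 + 1 ≠ 0 := by rwa [add_comm]
  have hπ : (π : ℂ) ≠ 0 := by exact_mod_cast Real.pi_ne_zero
  unfold modCauchyKernel
  rw [eq_div_iff (by simp [hπ, hyt, ht])]
  field_simp
  ring_nf
  simp only [I_sq, I_pow_three]
  ring

lemma two_pi_mul_modCauchyKernel_I_mul (hy : y ≠ 0) (t : ℝ) :
    2 * π * modCauchyKernel (I * y) t =
      2 * ((y : ℂ) + t * I)⁻¹ + (1 - t * I)⁻¹ - (1 + t * I)⁻¹ := by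
  have hyt := ofReal_add_ofReal_mul_I_ne_zero hy t
  have h1 : (1 : ℂ) + t * I ≠ 0 := by simpa using ofReal_add_ofReal_mul_I_ne_zero one_ne_zero t
  have h2 : (1 : ℂ) - t * I ≠ 0 := by
    simpa [sub_eq_add_neg] using ofReal_add_ofReal_mul_I_ne_zero one_ne_zero (-t)
  have hπ : (π : ℂ) ≠ 0 := by exact_mod_cast Real.pi_ne_zero
  rw [modCauchyKernel_I_mul hy]
  have ht : (1 + (t : ℂ) ^ 2) = (1 + t * I) * (1 - t * I) := by ring_nf; rw [I_sq]; ring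
  rw [ht]
  field_simp
  ring

lemma norm_one_add_mul_I_le (hy : y ≠ 0) (t : ℝ) :
    ‖1 + t * y * I‖ ≤ (|y|⁻¹ + |y|) * ‖(y : ℂ) + t * I‖ := by
  set n := ‖(y : ℂ) + t * I‖
  have hyn : |y| ≤ n := by simpa using abs_re_le_norm ((y : ℂ) + t * I)
  have htn : |t| ≤ n := by simpa using abs_im_le_norm ((y : ℂ) + t * I)
  have hy' : 0 < |y| := abs_pos.2 hy
  calc ‖1 + t * y * I‖ ≤ 1 + |t| * |y| := by
        simpa [abs_mul] using norm_add_le (1 : ℂ) (t * y * I)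
    _ ≤ |y|⁻¹ * n + n * |y| := by
        gcongr
        · rw [le_inv_mul_iff₀ hy', mul_one]; exact hyn
    _ = (|y|⁻¹ + |y|) * n := by ring

lemma norm_modCauchyKernel_I_mul_le (hy : y ≠ 0) (t : ℝ) :
    ‖modCauchyKernel (I * y) t‖ ≤ (|y|⁻¹ + |y|) / π * (1 + t ^ 2)⁻¹ := by
  have hn : 0 < ‖(y : ℂ) + t * I‖ := norm_pos_iff.2 (ofReal_add_ofReal_mul_I_ne_zero hy t)
  have hden : ‖(1 + (t : ℂ) ^ 2)‖ = 1 + t ^ 2 := by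
    rw [← ofReal_one, ← ofReal_pow, ← ofReal_add, norm_real, Real.norm_of_nonneg (by positivity)]
  rw [modCauchyKernel_I_mul hy, norm_div, norm_mul, norm_mul, hden, norm_real,
    Real.norm_of_nonneg Real.pi_pos.le, div_le_iff₀ (by positivity)]
  calc ‖1 + t * y * I‖ ≤ (|y|⁻¹ + |y|) * ‖(y : ℂ) + t * I‖ := norm_one_add_mul_I_le hy t
    _ = _ := by field_simp

lemma continuous_modCauchyKernel {z : ℂ} (hz : z.im ≠ 0) : Continuous (modCauchyKernel z) := by
  unfold modCauchyKernel
  refine continuous_const.mul (.add (continuous_const.div (by fun_prop) fun t h => hz ?_)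
    (.div (by fun_prop) (by fun_prop) fun t => ?_))
  · simpa using congrArg im h
  · rw [add_comm]; exact one_add_sq_ofReal_ne_zero t

lemma integrable_modCauchyKernel_I_mul (hy : y ≠ 0) : Integrable (modCauchyKernel (I * y)) :=
  (integrable_inv_one_add_sq.const_mul _).mono'
    (continuous_modCauchyKernel (by simpa using hy)).aestronglyMeasurable
    (.of_forall (norm_modCauchyKernel_I_mul_le hy))

end Kernel

noncomputable def modCauchyKernelFourier (y x : ℝ) : ℂ :=
  if x ≤ 0 then exp x else 2 * exp (-y * x) - exp (-x)

lemma modCauchyKernelFourier_eqOn_Iic (y : ℝ) :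
    EqOn (modCauchyKernelFourier y) (fun x : ℝ => exp (1 * x)) (Iic 0) := fun x hx => by
  simp [modCauchyKernelFourier, mem_Iic.1 hx]

lemma modCauchyKernelFourier_eqOn_Ioi (y : ℝ) :
    EqOn (modCauchyKernelFourier y)
      (fun x : ℝ => 2 * exp (-y * x) - exp (-1 * x)) (Ioi 0) := fun x hx => by
  simp [modCauchyKernelFourier, not_le.2 (mem_Ioi.1 hx)]

lemma modCauchyKernelFourier_of_ne_zero (y : ℝ) {x : ℝ} (hx : x ≠ 0) :
    modCauchyKernelFourier y x = (((Ici (0 : ℝ)).indicator (fun x : ℝ => 2 * Real.exp (-y * x)) x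
      - Real.sign x * Real.exp (-|x|) : ℝ) : ℂ) := by
  rcases hx.lt_or_gt with hneg | hpos
  · simp [modCauchyKernelFourier, hneg.le, not_le.2 hneg, Real.sign_of_neg hneg, abs_of_neg hneg]
  · simp [modCauchyKernelFourier, not_le.2 hpos, hpos.le, Real.sign_of_pos hpos, abs_of_pos hpos]

lemma continuous_modCauchyKernelFourier (y : ℝ) : Continuous (modCauchyKernelFourier y) :=
  Continuous.if_le (by fun_prop) (by fun_prop) continuous_id continuous_const
    fun x hx => by norm_num [hx]

lemma integrable_modCauchyKernelFourier {y : ℝ} (hy : 0 < y) :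
    Integrable (modCauchyKernelFourier y) := by
  rw [← integrableOn_univ, ← Iic_union_Ioi (a := 0), integrableOn_union]
  refine ⟨(integrableOn_exp_mul_complex_Iic (by simp) 0).congr_fun
      (modCauchyKernelFourier_eqOn_Iic y).symm measurableSet_Iic,
    IntegrableOn.congr_fun ?_ (modCauchyKernelFourier_eqOn_Ioi y).symm measurableSet_Ioi⟩
  exact ((integrableOn_exp_mul_complex_Ioi (by simpa using hy) 0).const_mul 2).sub
    (integrableOn_exp_mul_complex_Ioi (by simp) 0)

lemma fourierChar_smul_cexp_mul (c : ℂ) (v w : ℝ) :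
    exp (↑(-2 * π * v * w) * I) • exp (c * v) = exp ((c - 2 * π * w * I) * v) := by
  rw [smul_eq_mul, ← exp_add]
  push_cast
  ring_nf

lemma fourier_modCauchyKernelFourier {y : ℝ} (hy : 0 < y) (w : ℝ) :
    𝓕 (modCauchyKernelFourier y) w = 2 * π * modCauchyKernel (I * y) (2 * π * w) := by
  set a : ℂ := 2 * π * w * I
  have hIic : EqOn (fun v : ℝ => exp (↑(-2 * π * v * w) * I) • modCauchyKernelFourier y v)
      (fun v : ℝ => exp ((1 - a) * v)) (Iic 0) := fun v hv => by
    dsimp only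
    rw [modCauchyKernelFourier_eqOn_Iic y hv, fourierChar_smul_cexp_mul]
  have hIoi : EqOn (fun v : ℝ => exp (↑(-2 * π * v * w) * I) • modCauchyKernelFourier y v)
      (fun v : ℝ => 2 * exp ((-y - a) * v) - exp ((-1 - a) * v)) (Ioi 0) := fun v hv => by
    dsimp only
    rw [modCauchyKernelFourier_eqOn_Ioi y hv, smul_sub, ← mul_smul_comm,
      fourierChar_smul_cexp_mul, fourierChar_smul_cexp_mul]
  have hre : (1 - a).re = 1 ∧ (-y - a).re = -y ∧ (-1 - a).re = -1 := by simp [a]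
  have hint₁ := integrableOn_exp_mul_complex_Iic (a := 1 - a) (by simp [hre]) 0
  have hint₂ := integrableOn_exp_mul_complex_Ioi (a := -y - a) (by simp [hre, hy]) 0
  have hint₃ := integrableOn_exp_mul_complex_Ioi (a := -1 - a) (by simp [hre]) 0
  rw [Real.fourier_real_eq_integral_exp_smul, ← intervalIntegral.integral_Iic_add_Ioi
    (hint₁.congr_fun hIic.symm measurableSet_Iic)
    (IntegrableOn.congr_fun ((hint₂.const_mul 2).sub hint₃) hIoi.symm measurableSet_Ioi),
    setIntegral_congr_fun measurableSet_Iic hIic, setIntegral_congr_fun measurableSet_Ioi hIoi,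
    integral_sub (hint₂.const_mul 2) hint₃, integral_const_mul,
    integral_exp_mul_complex_Iic (by simp [hre]), integral_exp_mul_complex_Ioi (by simp [hre, hy]),
    integral_exp_mul_complex_Ioi (by simp [hre]), two_pi_mul_modCauchyKernel_I_mul hy.ne']
  rw [show -(y : ℂ) - a = -(y + a) by ring, show (-1 : ℂ) - a = -(1 + a) by ring]
  simp only [ofReal_zero, mul_zero, exp_zero, neg_div_neg_eq, one_div, a]
  push_cast
  ring

/-- Fourier inversion for `𝓕`, normalised as `e^{-2πixw}`, rewritten for the kernel `e^{ixt}`. -/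
theorem integral_mul_cexp_eq_of_fourier_eq {f g : ℝ → ℂ} (hf : Integrable f) (hg : Integrable g)
    (hfg : ∀ w, 𝓕 f w = 2 * π * g (2 * π * w)) {x : ℝ} (hx : ContinuousAt f x) :
    ∫ t, g t * exp (I * x * t) = f x := by
  have h2π : 0 < 2 * π := by positivity
  have hFf : 𝓕 f = fun w => 2 * π * g (2 * π * w) := funext hfg
  have hint : Integrable (𝓕 f) := by
    rw [hFf]
    exact ((integrable_comp_mul_left_iff g h2π.ne').2 hg).const_mul _
  rw [← hf.fourierInv_fourier_eq hint hx, Real.fourierInv_eq', hFf]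
  have hintegrand : ∀ v : ℝ, exp (↑(2 * π * inner ℝ v x) * I) • (2 * π * g (2 * π * v)) =
      (2 * π : ℂ) * (g (2 * π * v) * exp (I * x * ↑(2 * π * v))) := fun v => by
    rw [Real.inner_apply, smul_eq_mul]
    push_cast
    ring_nf
  simp_rw [hintegrand, integral_const_mul,
    Measure.integral_comp_mul_left (fun t => g t * exp (I * x * t)), abs_inv,
    abs_of_pos h2π, real_smul]
  push_cast
  field_simp

/-- For `y > 0`, the modified Cauchy kernel `t ↦ γ(iy; t)` is integrable on `ℝ`, its
Fourier transform at `x ≠ 0` equals `2·𝟙_{[0,∞)}(x) e^{-yx} - sign(x) e^{-|x|}`, and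
at `x = 0` the integral equals `1`. -/
theorem stmt_12 (y : ℝ) (hy : 0 < y) :
    Integrable (fun t : ℝ => modCauchyKernel (Complex.I * y) t) ∧
      (∀ x : ℝ, x ≠ 0 →
        ∫ t : ℝ, modCauchyKernel (Complex.I * y) t * Complex.exp (Complex.I * x * t) =
          (((Ici (0 : ℝ)).indicator (fun x : ℝ => 2 * Real.exp (-y * x)) x
            - Real.sign x * Real.exp (-|x|) : ℝ) : ℂ)) ∧
      (∫ t : ℝ, modCauchyKernel (Complex.I * y) t * Complex.exp (Complex.I * (0 : ℝ) * t)) = 1 := by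
  have hinv (x : ℝ) :
      ∫ t, modCauchyKernel (I * y) t * exp (I * x * t) = modCauchyKernelFourier y x :=
    integral_mul_cexp_eq_of_fourier_eq (integrable_modCauchyKernelFourier hy)
      (integrable_modCauchyKernel_I_mul hy.ne') (fourier_modCauchyKernelFourier hy)
      (continuous_modCauchyKernelFourier y).continuousAt
  refine ⟨integrable_modCauchyKernel_I_mul hy.ne', fun x hx => ?_, ?_⟩
  · rw [hinv, modCauchyKernelFourier_of_ne_zero y hx]
  · rw [hinv]
    simp [modCauchyKernelFourier]
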